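/- The function φ*(p) := π - 2 arcsin(q*(p)) is continuous and strictly decreasing on (1, ∞), with φ*(p) → π/2 as p ↓ 1 and φ*(p) → 0 as p → ∞; in particular 0 < φ*(p) < π/2 for all p ∈ (1, ∞). -/

import Mathlib

open Real Filter

/-- The complete `p`-elliptic integral of the first kind. -/
noncomputable def K1 (p q : ℝ) : ℝ :=
  ∫ z in (0:ℝ)..1, (1 - q ^ 2 * z ^ 2) ^ (-(1/2) : ℝ) * (1 - z ^ 2) ^ (-(1 / p))

/-- The complete `p`-elliptic integral of the second kind. -/
noncomputable def E1 (p q : ℝ) : ℝ :=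
  ∫ z in (0:ℝ)..1, (1 - q ^ 2 * z ^ 2) ^ ((1/2) : ℝ) * (1 - z ^ 2) ^ (-(1 / p))

/-!
Write `2 E₁,ₚ(q) - K₁,ₚ(q) = ∫₀¹ k(q²z²) (1 - z²)^(-1/p) dz` with
`k(x) = 2√(1-x) - 1/√(1-x) = (1 - 2x)/√(1-x)`, which is strictly decreasing. Hence for fixed `p`
the gap is strictly decreasing in `q`, positive when `2q² ≤ 1`, and `q*(p) > 1/√2` is its unique
zero. For `p₁ < p₂` the weights differ by the decreasing factor `(1 - z²)^(1/p₁ - 1/p₂)`, while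
the integrand changes sign exactly once, so a zero at `p₁` makes the gap positive at `p₂`: `q*` is
strictly increasing. Dominated convergence gives continuity in `p` and the limit
`∫₀¹ k(q²z²) dz = √(1 - q²) > 0` as `p → ∞`, forcing `q* → 1`; as `p ↓ 1` the weight's mass
piles up near `z = 1`, where `k(q²z²) < 0` once `2q² > 1`, forcing `q* → 1/√2`. Since
`arcsin (1/√2) = π/4`, all of this transfers to `φ* = π - 2 arcsin q*`.
-/

open Set MeasureTheory intervalIntegral Topology
open scoped Interval

lemma sqrt_two_div_two_mem_Ioo : √2 / 2 ∈ Ioo (0:ℝ) 1 :=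
  ⟨by positivity, by linarith [sqrt_two_lt_three_halves]⟩

lemma arcsin_sqrt_two_div_two : arcsin (√2 / 2) = π / 4 := by
  rw [← sin_pi_div_four, arcsin_sin (by linarith [pi_pos]) (by linarith [pi_pos])]

lemma neg_one_lt_neg_one_div {p : ℝ} (hp : 1 < p) : -1 < -(1 / p) :=
  neg_lt_neg ((div_lt_one (by linarith)).2 hp)

lemma one_sub_sq_pos {z : ℝ} (hz : z ∈ Ico (0:ℝ) 1) : 0 < 1 - z ^ 2 :=
  sub_pos.2 (pow_lt_one₀ hz.1 hz.2 two_ne_zero)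

lemma continuousOn_one_sub_rpow (r : ℝ) : ContinuousOn (fun x : ℝ => (1 - x) ^ r) (Iio 1) :=
  (continuousOn_const.sub continuousOn_id).rpow_const fun _ hx => Or.inl (sub_pos.2 hx).ne'

lemma intervalIntegrable_one_sub_rpow {r : ℝ} (hr : -1 < r) (a b : ℝ) :
    IntervalIntegrable (fun z => (1 - z) ^ r) volume a b := by
  simpa using (intervalIntegrable_rpow' (a := 1 - a) (b := 1 - b) hr).comp_sub_left 1

lemma integral_one_sub_rpow {r : ℝ} (hr : -1 < r) (a : ℝ) :
    ∫ z in a..1, (1 - z) ^ r = (1 - a) ^ (r + 1) / (r + 1) := by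
  rw [integral_comp_sub_left (fun u => u ^ r), sub_self, integral_rpow (Or.inl hr),
    zero_rpow (by linarith), sub_zero]

/-- Since `∫ φ = 0`, one may replace `r` by `r - r z₀`, which has the sign of `φ` on both sides
of `z₀`. -/
theorem integral_mul_pos_of_sign_change {φ r : ℝ → ℝ} {a b z₀ : ℝ} (hz₀ : z₀ ∈ Ioo a b)
    (hφ : IntervalIntegrable φ volume a b) (hr : ContinuousOn r (Icc a b))
    (hr_anti : StrictAntiOn r (Icc a b)) (hpos : ∀ z ∈ Ioo a z₀, 0 < φ z)
    (hnonpos : ∀ z ∈ Ioc z₀ b, φ z ≤ 0) (hφ₀ : ∫ z in a..b, φ z = 0) :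
    0 < ∫ z in a..b, r z * φ z := by
  have hz₀' : z₀ ∈ Icc a b := Ioo_subset_Icc_self hz₀
  have hz₀u : z₀ ∈ [[a, b]] := mem_uIcc_of_le hz₀'.1 hz₀'.2
  have hψ : IntervalIntegrable (fun z => (r z - r z₀) * φ z) volume a b :=
    hφ.continuousOn_mul (by rw [uIcc_of_le (hz₀'.1.trans hz₀'.2)]; exact hr.sub continuousOn_const)
  have hshift : ∫ z in a..b, r z * φ z = ∫ z in a..b, (r z - r z₀) * φ z := by
    rw [← add_zero (∫ z in a..b, (r z - r z₀) * φ z), ← mul_zero (r z₀), ← hφ₀,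
      ← intervalIntegral.integral_const_mul, ← intervalIntegral.integral_add hψ (hφ.const_mul _)]
    congr 1 with z
    ring
  have hleft := hψ.mono_set (uIcc_subset_uIcc left_mem_uIcc hz₀u)
  rw [hshift, ← integral_add_adjacent_intervals hleft
    (hψ.mono_set (uIcc_subset_uIcc hz₀u right_mem_uIcc))]
  refine add_pos_of_pos_of_nonneg (intervalIntegral_pos_of_pos_on hleft
    (fun z hz => mul_pos (sub_pos.2 (hr_anti ⟨hz.1.le, hz.2.le.trans hz₀'.2⟩ hz₀' hz.2))
      (hpos z hz)) hz₀.1) (integral_nonneg hz₀.2.le fun z hz => ?_)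
  rcases hz.1.eq_or_lt with rfl | hlt
  · simp
  · exact mul_nonneg_of_nonpos_of_nonpos
      (sub_nonpos.2 (hr_anti.antitoneOn hz₀' ⟨hz₀'.1.trans hz.1, hz.2⟩ hz.1))
      (hnonpos z ⟨hlt, hz.2⟩)

namespace PElliptic

noncomputable def weight (p z : ℝ) : ℝ := (1 - z ^ 2) ^ (-(1 / p))

noncomputable def kernel (x : ℝ) : ℝ := 2 * (1 - x) ^ ((1/2) : ℝ) - (1 - x) ^ (-(1/2) : ℝ)

noncomputable def gap (p q : ℝ) : ℝ := 2 * E1 p q - K1 p q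

lemma one_sub_rpow_half_eq {x : ℝ} (hx : x < 1) :
    (1 - x) ^ ((1/2) : ℝ) = (1 - x) * (1 - x) ^ (-(1/2) : ℝ) := by
  rw [← rpow_one_add' (sub_pos.2 hx).le (by norm_num)]; norm_num

lemma kernel_eq_mul_rpow {x : ℝ} (hx : x < 1) :
    kernel x = (1 - 2 * x) * (1 - x) ^ (-(1/2) : ℝ) := by
  rw [kernel, one_sub_rpow_half_eq hx]; ring

lemma kernel_pos_iff {x : ℝ} (hx : x < 1) : 0 < kernel x ↔ 2 * x < 1 := by
  rw [kernel_eq_mul_rpow hx, mul_pos_iff_of_pos_right (rpow_pos_of_pos (sub_pos.2 hx) _),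
    sub_pos]

lemma kernel_neg_iff {x : ℝ} (hx : x < 1) : kernel x < 0 ↔ 1 < 2 * x := by
  have h := rpow_pos_of_pos (sub_pos.2 hx) (-(1/2))
  rw [kernel_eq_mul_rpow hx, mul_neg_iff, sub_pos, sub_neg]
  constructor
  · rintro (⟨-, h'⟩ | ⟨h', -⟩) <;> linarith
  · exact fun h' => Or.inr ⟨h', h⟩

lemma kernel_zero : kernel 0 = 1 := by norm_num [kernel]

lemma kernel_strictAntiOn : StrictAntiOn kernel (Iio 1) := by
  intro x _ y hy hxy
  have hy' : 0 < 1 - y := sub_pos.2 hy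
  have h : 1 - y < 1 - x := by linarith
  have h₁ := rpow_lt_rpow hy'.le h (by norm_num : (0:ℝ) < 1/2)
  have h₂ := rpow_lt_rpow_of_neg hy' h (by norm_num : -(1/2) < (0:ℝ))
  simp only [kernel]; linarith

lemma mapsTo_sq_mul_sq {q : ℝ} (hq : q ∈ Ico (0:ℝ) 1) :
    MapsTo (fun z : ℝ => q ^ 2 * z ^ 2) (Icc 0 1) (Iio 1) := fun _ hz =>
  mul_lt_one_of_nonneg_of_lt_one_left (sq_nonneg q) (pow_lt_one₀ hq.1 hq.2 two_ne_zero)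
    (pow_le_one₀ hz.1 hz.2)

lemma continuousOn_one_sub_sq_mul_sq_rpow {q : ℝ} (hq : q ∈ Ico (0:ℝ) 1) (r : ℝ) :
    ContinuousOn (fun z : ℝ => (1 - q ^ 2 * z ^ 2) ^ r) (Icc 0 1) :=
  (continuousOn_one_sub_rpow r).comp (by fun_prop) (mapsTo_sq_mul_sq hq)

lemma continuousOn_kernel_sq_mul_sq {q : ℝ} (hq : q ∈ Ico (0:ℝ) 1) :
    ContinuousOn (fun z : ℝ => kernel (q ^ 2 * z ^ 2)) (Icc 0 1) :=
  (continuousOn_const.mul (continuousOn_one_sub_sq_mul_sq_rpow hq _)).sub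
    (continuousOn_one_sub_sq_mul_sq_rpow hq _)

lemma kernel_sq_mul_sq_antitoneOn {q : ℝ} (hq : q ∈ Ico (0:ℝ) 1) :
    AntitoneOn (fun z => kernel (q ^ 2 * z ^ 2)) (Icc 0 1) := fun _ hz _ hz' h =>
  kernel_strictAntiOn.antitoneOn (mapsTo_sq_mul_sq hq hz) (mapsTo_sq_mul_sq hq hz')
    (mul_le_mul_of_nonneg_left (pow_le_pow_left₀ hz.1 h 2) (sq_nonneg q))

lemma two_mul_sq_mul_sq_lt_one_iff {q z : ℝ} (hq : 0 < q) (hz : 0 ≤ z) :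
    2 * (q ^ 2 * z ^ 2) < 1 ↔ z < (√2 * q)⁻¹ := by
  have h : 2 * (q ^ 2 * z ^ 2) = (√2 * q * z) ^ 2 := by
    rw [mul_pow, mul_pow, sq_sqrt zero_le_two]; ring
  rw [h, sq_lt_one_iff₀ (by positivity), ← one_div, lt_div_iff₀ (by positivity), mul_comm]

lemma hasDerivAt_mul_one_sub_sq_mul_sq_rpow {q z : ℝ} (h : q ^ 2 * z ^ 2 < 1) :
    HasDerivAt (fun z => z * (1 - q ^ 2 * z ^ 2) ^ ((1/2) : ℝ)) (kernel (q ^ 2 * z ^ 2)) z := by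
  have hbase : HasDerivAt (fun z : ℝ => 1 - q ^ 2 * z ^ 2) (-(q ^ 2 * (2 * z))) z := by
    simpa using ((hasDerivAt_pow 2 z).const_mul (q ^ 2)).const_sub 1
  refine ((hasDerivAt_id z).mul (hbase.rpow_const (Or.inl (sub_pos.2 h).ne'))).congr_deriv ?_
  rw [kernel_eq_mul_rpow h, show (1/2 : ℝ) - 1 = -(1/2) by norm_num, one_sub_rpow_half_eq h]
  simp only [id_eq]; ring

lemma integral_kernel_sq_mul_sq {q : ℝ} (hq : q ∈ Ico (0:ℝ) 1) :
    ∫ z in (0:ℝ)..1, kernel (q ^ 2 * z ^ 2) = (1 - q ^ 2) ^ ((1/2) : ℝ) := by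
  rw [integral_eq_sub_of_hasDerivAt
    (fun z hz => hasDerivAt_mul_one_sub_sq_mul_sq_rpow
      (mapsTo_sq_mul_sq hq (by rwa [uIcc_of_le zero_le_one] at hz)))
    ((continuousOn_kernel_sq_mul_sq hq).intervalIntegrable_of_Icc zero_le_one)]
  simp

lemma weight_nonneg (p : ℝ) {z : ℝ} (hz : z ∈ Icc (0:ℝ) 1) : 0 ≤ weight p z :=
  rpow_nonneg (sub_nonneg.2 (pow_le_one₀ hz.1 hz.2)) _

lemma weight_pos (p : ℝ) {z : ℝ} (hz : z ∈ Ico (0:ℝ) 1) : 0 < weight p z :=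
  rpow_pos_of_pos (one_sub_sq_pos hz) _

lemma weight_eq_mul (p : ℝ) {z : ℝ} (hz : z ∈ Icc (0:ℝ) 1) :
    weight p z = (1 - z) ^ (-(1 / p)) * (1 + z) ^ (-(1 / p)) := by
  rw [weight, ← mul_rpow (by linarith [hz.2]) (by linarith [hz.1])]
  ring_nf

lemma weight_le_one_sub_rpow {p z : ℝ} (hp : 0 < p) (hz : z ∈ Icc (0:ℝ) 1) :
    weight p z ≤ (1 - z) ^ (-(1 / p)) := by
  rw [weight_eq_mul p hz]
  exact mul_le_of_le_one_right (rpow_nonneg (sub_nonneg.2 hz.2) _)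
    (rpow_le_one_of_one_le_of_nonpos (by linarith [hz.1]) (neg_nonpos.2 (by positivity)))

lemma one_sub_rpow_div_two_le_weight {p z : ℝ} (hp : 1 ≤ p) (hz : z ∈ Icc (0:ℝ) 1) :
    (1 - z) ^ (-(1 / p)) / 2 ≤ weight p z := by
  have h : (2:ℝ)⁻¹ ≤ (1 + z) ^ (-(1 / p)) := calc
    (2:ℝ)⁻¹ = 2 ^ (-1 : ℝ) := by rw [rpow_neg_one]
    _ ≤ 2 ^ (-(1 / p)) := rpow_le_rpow_of_exponent_le (by norm_num)
      (neg_le_neg ((div_le_one (by linarith)).2 hp))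
    _ ≤ (1 + z) ^ (-(1 / p)) := rpow_le_rpow_of_nonpos (by linarith [hz.1])
      (by linarith [hz.2]) (neg_nonpos.2 (by positivity))
  rw [weight_eq_mul p hz, div_eq_mul_inv]
  exact mul_le_mul_of_nonneg_left h (rpow_nonneg (sub_nonneg.2 hz.2) _)

lemma weight_le_weight_of_le {p₁ p₂ z : ℝ} (hp : 0 < p₁) (h : p₁ ≤ p₂)
    (hz : z ∈ Ico (0:ℝ) 1) : weight p₂ z ≤ weight p₁ z :=
  rpow_le_rpow_of_exponent_ge (one_sub_sq_pos hz) (by nlinarith [hz.1])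
    (neg_le_neg (one_div_le_one_div_of_le hp h))

lemma weight_monotoneOn {p : ℝ} (hp : 0 < p) : MonotoneOn (weight p) (Ico 0 1) :=
  fun _ hz _ hz' h => rpow_le_rpow_of_nonpos (one_sub_sq_pos hz')
    (by nlinarith [hz.1]) (neg_nonpos.2 (by positivity))

lemma weight_eq_rpow_mul_weight {p₂ z : ℝ} (hp : p₂ ≠ 0) (p₁ : ℝ) (hz : z ∈ Icc (0:ℝ) 1) :
    weight p₂ z = (1 - z ^ 2) ^ (1 / p₁ - 1 / p₂) * weight p₁ z := by
  have he : 1 / p₁ - 1 / p₂ + -(1 / p₁) = -(1 / p₂) := by ring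
  rw [weight, weight, ← rpow_add' (sub_nonneg.2 (pow_le_one₀ hz.1 hz.2))
    (he ▸ by simpa using hp), he]

lemma intervalIntegrable_weight {p : ℝ} (hp : 1 < p) :
    IntervalIntegrable (weight p) volume 0 1 := by
  refine (intervalIntegrable_one_sub_rpow (neg_one_lt_neg_one_div hp) 0 1).mono_fun
    (Measurable.aestronglyMeasurable (by unfold weight; fun_prop)) ?_
  filter_upwards [ae_restrict_mem measurableSet_uIoc] with z hz
  rw [uIoc_of_le zero_le_one] at hz
  have hz' : z ∈ Icc (0:ℝ) 1 := Ioc_subset_Icc_self hz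
  rw [norm_of_nonneg (weight_nonneg p hz'), norm_of_nonneg (rpow_nonneg (sub_nonneg.2 hz.2) _)]
  exact weight_le_one_sub_rpow (by linarith) hz'

lemma intervalIntegrable_mul_weight {g : ℝ → ℝ} {p : ℝ} (hg : ContinuousOn g (Icc 0 1))
    (hp : 1 < p) : IntervalIntegrable (fun z => g z * weight p z) volume 0 1 :=
  (intervalIntegrable_weight hp).continuousOn_mul (by rwa [uIcc_of_le zero_le_one])

lemma one_sub_div_two_mul_inv_le_integral_weight {p z₁ : ℝ} (hp : 1 < p)
    (hz₁ : z₁ ∈ Icc (0:ℝ) 1) : (1 - z₁) / 2 * (p - 1)⁻¹ ≤ ∫ z in z₁..1, weight p z := by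
  have hr := neg_one_lt_neg_one_div hp
  set s := -(1 / p) + 1 with hs_def
  have hs : s = (p - 1) / p := by rw [hs_def]; field_simp; ring
  have hs₀ : 0 < s := by rw [hs]; exact div_pos (by linarith) (by linarith)
  have h₁ : 1 - z₁ ≤ (1 - z₁) ^ s := by
    have hs₁ : s ≤ 1 := by rw [hs]; exact div_le_one_of_le₀ (by linarith) (by linarith)
    simpa only [rpow_one] using
      rpow_le_rpow_of_exponent_ge' (sub_nonneg.2 hz₁.2) (by linarith [hz₁.1]) hs₀.le hs₁
  have h₂ : (p - 1)⁻¹ ≤ s⁻¹ := inv_anti₀ hs₀ (by rw [hs]; exact div_le_self (by linarith) hp.le)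
  calc (1 - z₁) / 2 * (p - 1)⁻¹ ≤ (1 - z₁) ^ s / 2 * s⁻¹ :=
        mul_le_mul (by gcongr) h₂ (by positivity)
          (div_nonneg (rpow_nonneg (sub_nonneg.2 hz₁.2) _) zero_le_two)
    _ = ∫ z in z₁..1, (1 - z) ^ (-(1 / p)) / 2 := by
      rw [intervalIntegral.integral_div, integral_one_sub_rpow hr]; ring
    _ ≤ ∫ z in z₁..1, weight p z :=
      integral_mono_on hz₁.2 ((intervalIntegrable_one_sub_rpow hr _ _).div_const 2)
        ((intervalIntegrable_weight hp).mono_set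
          (uIcc_subset_uIcc (mem_uIcc_of_le hz₁.1 hz₁.2) right_mem_uIcc))
        fun z hz => one_sub_rpow_div_two_le_weight hp.le ⟨hz₁.1.trans hz.1, hz.2⟩

lemma tendsto_integral_weight_nhdsGT_one {z₁ : ℝ} (hz₁ : z₁ ∈ Ico (0:ℝ) 1) :
    Tendsto (fun p => ∫ z in z₁..1, weight p z) (𝓝[>] 1) atTop := by
  have hsub : Tendsto (fun p : ℝ => p - 1) (𝓝[>] 1) (𝓝[>] 0) :=
    tendsto_nhdsWithin_iff.2 ⟨((continuous_sub_right 1).tendsto' 1 0 (sub_self 1)).mono_left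
      nhdsWithin_le_nhds, eventually_mem_nhdsWithin.mono fun p hp => mem_Ioi.2 (sub_pos.2 hp)⟩
  refine tendsto_atTop_mono' _ (eventually_mem_nhdsWithin.mono fun p hp =>
    one_sub_div_two_mul_inv_le_integral_weight hp (Ico_subset_Icc_self hz₁)) ?_
  exact (tendsto_inv_nhdsGT_zero.comp hsub).const_mul_atTop (by linarith [hz₁.2])

lemma tendsto_integral_mul_weight {l : Filter ℝ} [l.IsCountablyGenerated] {g : ℝ → ℝ}
    {p₁ e : ℝ} (hg : ContinuousOn g (Icc 0 1)) (hp₁ : 1 < p₁) (hl : ∀ᶠ p in l, p₁ ≤ p)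
    (he : Tendsto (fun p => 1 / p) l (𝓝 e)) :
    Tendsto (fun p => ∫ z in (0:ℝ)..1, g z * weight p z) l
      (𝓝 (∫ z in (0:ℝ)..1, g z * (1 - z ^ 2) ^ (-e))) := by
  obtain ⟨C, hC⟩ := isCompact_Icc.exists_bound_of_continuousOn hg
  have hIco : ∀ z ∈ Ι (0:ℝ) 1, z ≠ 1 → z ∈ Ico (0:ℝ) 1 := fun z hz hz1 => by
    rw [uIoc_of_le zero_le_one] at hz
    exact ⟨hz.1.le, hz.2.lt_of_ne hz1⟩
  refine tendsto_integral_filter_of_dominated_convergence (fun z => C * weight p₁ z) ?_ ?_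
    ((intervalIntegrable_weight hp₁).const_mul C) ?_
  · filter_upwards [hl] with p hp
    exact (intervalIntegrable_mul_weight hg (hp₁.trans_le hp)).def'.aestronglyMeasurable
  · filter_upwards [hl] with p hp
    filter_upwards [Measure.ae_ne volume 1] with z hz1 hz
    have hz' := Ico_subset_Icc_self (hIco z hz hz1)
    rw [norm_mul, norm_of_nonneg (weight_nonneg p hz')]
    exact mul_le_mul (hC z hz') (weight_le_weight_of_le (by linarith) hp (hIco z hz hz1))
      (weight_nonneg p hz') ((norm_nonneg _).trans (hC z hz'))
  · filter_upwards [Measure.ae_ne volume 1] with z hz1 hz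
    exact tendsto_const_nhds.mul
      ((continuousAt_const_rpow (one_sub_sq_pos (hIco z hz hz1)).ne').tendsto.comp he.neg)

lemma gap_eq_integral {p q : ℝ} (hp : 1 < p) (hq : q ∈ Ico (0:ℝ) 1) :
    gap p q = ∫ z in (0:ℝ)..1, kernel (q ^ 2 * z ^ 2) * weight p z := by
  have hE := intervalIntegrable_mul_weight (continuousOn_one_sub_sq_mul_sq_rpow hq (1/2)) hp
  have hK := intervalIntegrable_mul_weight (continuousOn_one_sub_sq_mul_sq_rpow hq (-(1/2))) hp
  calc gap p q
      = 2 * (∫ z in (0:ℝ)..1, (1 - q ^ 2 * z ^ 2) ^ ((1/2) : ℝ) * weight p z)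
        - ∫ z in (0:ℝ)..1, (1 - q ^ 2 * z ^ 2) ^ (-(1/2) : ℝ) * weight p z := rfl
    _ = _ := by
      rw [← intervalIntegral.integral_const_mul,
        ← intervalIntegral.integral_sub (hE.const_mul 2) hK]
      congr 1 with z
      simp only [kernel]; ring

lemma intervalIntegrable_kernel_mul_weight {p q : ℝ} (hp : 1 < p) (hq : q ∈ Ico (0:ℝ) 1) :
    IntervalIntegrable (fun z => kernel (q ^ 2 * z ^ 2) * weight p z) volume 0 1 :=
  intervalIntegrable_mul_weight (continuousOn_kernel_sq_mul_sq hq) hp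

lemma gap_strictAntiOn {p : ℝ} (hp : 1 < p) : StrictAntiOn (gap p) (Ico 0 1) := by
  intro q₁ hq₁ q₂ hq₂ hlt
  have h₁ := intervalIntegrable_kernel_mul_weight hp hq₁
  have h₂ := intervalIntegrable_kernel_mul_weight hp hq₂
  rw [gap_eq_integral hp hq₁, gap_eq_integral hp hq₂, ← sub_pos,
    ← intervalIntegral.integral_sub h₁ h₂]
  refine intervalIntegral_pos_of_pos_on (h₁.sub h₂) (fun z hz => ?_) zero_lt_one
  have hzI : z ∈ Icc (0:ℝ) 1 := Ioo_subset_Icc_self hz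
  rw [← sub_mul]
  refine mul_pos (sub_pos.2 (kernel_strictAntiOn (mapsTo_sq_mul_sq hq₁ hzI)
    (mapsTo_sq_mul_sq hq₂ hzI) ?_)) (weight_pos p (Ioo_subset_Ico_self hz))
  exact mul_lt_mul_of_pos_right (pow_lt_pow_left₀ hlt hq₁.1 two_ne_zero) (pow_pos hz.1 2)

lemma gap_pos_of_two_mul_sq_le {p q : ℝ} (hp : 1 < p) (hq : q ∈ Ico (0:ℝ) 1)
    (h : 2 * q ^ 2 ≤ 1) : 0 < gap p q := by
  rw [gap_eq_integral hp hq]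
  refine intervalIntegral_pos_of_pos_on (intervalIntegrable_kernel_mul_weight hp hq)
    (fun z hz => mul_pos ?_ (weight_pos p (Ioo_subset_Ico_self hz))) zero_lt_one
  rw [kernel_pos_iff (mapsTo_sq_mul_sq hq (Ioo_subset_Icc_self hz))]
  nlinarith [pow_lt_one₀ hz.1.le hz.2 two_ne_zero, mul_le_mul_of_nonneg_right h (sq_nonneg z)]

lemma gap_pos_of_gap_eq_zero {p₁ p₂ q : ℝ} (hp₁ : 1 < p₁) (hp : p₁ < p₂)
    (hq : q ∈ Ico (0:ℝ) 1) (h₀ : gap p₁ q = 0) : 0 < gap p₂ q := by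
  have hq₂ : 1 < 2 * q ^ 2 := by
    by_contra! h
    exact (gap_pos_of_two_mul_sq_le hp₁ hq h).ne' h₀
  have hq₀ : 0 < q := lt_of_le_of_ne hq.1 (by rintro rfl; norm_num at hq₂)
  have hc : 0 < 1 / p₁ - 1 / p₂ := sub_pos.2 (one_div_lt_one_div_of_lt (by linarith) hp)
  have hz₀ : (√2 * q)⁻¹ < 1 := inv_lt_one_of_one_lt₀
    ((one_lt_sq_iff₀ (by positivity)).1 (by rwa [mul_pow, sq_sqrt zero_le_two]))
  have hw : EqOn (fun z => kernel (q ^ 2 * z ^ 2) * weight p₂ z)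
      (fun z => (1 - z ^ 2) ^ (1 / p₁ - 1 / p₂) * (kernel (q ^ 2 * z ^ 2) * weight p₁ z))
      (uIcc 0 1) := fun z hz => by
    rw [uIcc_of_le zero_le_one] at hz
    simp only [weight_eq_rpow_mul_weight (by linarith : p₂ ≠ 0) p₁ hz, mul_left_comm]
  rw [gap_eq_integral hp₁ hq] at h₀
  rw [gap_eq_integral (hp₁.trans hp) hq, integral_congr hw]
  refine integral_mul_pos_of_sign_change ⟨by positivity, hz₀⟩
    (intervalIntegrable_kernel_mul_weight hp₁ hq)
    ((continuous_const.sub (continuous_pow 2)).rpow_const fun _ => Or.inr hc.le).continuousOn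
    (fun z hz z' hz' h => rpow_lt_rpow (sub_nonneg.2 (pow_le_one₀ hz'.1 hz'.2))
      (sub_lt_sub_left (pow_lt_pow_left₀ h hz.1 two_ne_zero) 1) hc)
    (fun z hz => ?_) (fun z hz => ?_) h₀
  · have hz' : z ∈ Ico (0:ℝ) 1 := ⟨hz.1.le, hz.2.trans hz₀⟩
    refine mul_pos ?_ (weight_pos p₁ hz')
    rw [kernel_pos_iff (mapsTo_sq_mul_sq hq (Ico_subset_Icc_self hz')),
      two_mul_sq_mul_sq_lt_one_iff hq₀ hz'.1]
    exact hz.2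
  · have hz' : z ∈ Icc (0:ℝ) 1 := ⟨(by positivity : (0:ℝ) ≤ _).trans hz.1.le, hz.2⟩
    refine mul_nonpos_of_nonpos_of_nonneg ?_ (weight_nonneg p₁ hz')
    rw [← not_lt, kernel_pos_iff (mapsTo_sq_mul_sq hq hz'),
      two_mul_sq_mul_sq_lt_one_iff hq₀ hz'.1]
    exact hz.1.not_gt

lemma continuousAt_gap {p₀ q : ℝ} (hp₀ : 1 < p₀) (hq : q ∈ Ico (0:ℝ) 1) :
    ContinuousAt (fun p => gap p q) p₀ := by
  have h := tendsto_integral_mul_weight (continuousOn_kernel_sq_mul_sq hq)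
    (by linarith : 1 < (1 + p₀) / 2) (eventually_ge_nhds (by linarith : (1 + p₀) / 2 < p₀))
    ((continuousAt_const.div continuousAt_id (by positivity)).tendsto)
  rw [ContinuousAt, gap_eq_integral hp₀ hq]
  exact h.congr' ((eventually_gt_nhds hp₀).mono fun p hp => (gap_eq_integral hp hq).symm)

lemma tendsto_gap_atTop {q : ℝ} (hq : q ∈ Ico (0:ℝ) 1) :
    Tendsto (fun p => gap p q) atTop (𝓝 ((1 - q ^ 2) ^ ((1/2) : ℝ))) := by
  have h := tendsto_integral_mul_weight (continuousOn_kernel_sq_mul_sq hq) one_lt_two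
    (eventually_ge_atTop 2) (by simpa only [one_div] using tendsto_inv_atTop_zero)
  simp only [neg_zero, rpow_zero, mul_one, integral_kernel_sq_mul_sq hq] at h
  exact h.congr' ((eventually_gt_atTop 1).mono fun p hp => (gap_eq_integral hp hq).symm)

lemma gap_le_add_mul_integral_weight {p q z₁ : ℝ} (hp : 1 < p) (hq : q ∈ Ico (0:ℝ) 1)
    (hz₁ : z₁ ∈ Ioo (0:ℝ) 1) :
    gap p q ≤ z₁ * weight 1 z₁ + kernel (q ^ 2 * z₁ ^ 2) * ∫ z in z₁..1, weight p z := by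
  have hint := intervalIntegrable_kernel_mul_weight hp hq
  have hz₁u : z₁ ∈ [[(0:ℝ), 1]] := mem_uIcc_of_le hz₁.1.le hz₁.2.le
  have hk := kernel_sq_mul_sq_antitoneOn hq
  rw [gap_eq_integral hp hq, ← integral_add_adjacent_intervals
    (hint.mono_set (uIcc_subset_uIcc left_mem_uIcc hz₁u))
    (hint.mono_set (uIcc_subset_uIcc hz₁u right_mem_uIcc))]
  gcongr ?_ + ?_
  · calc ∫ z in (0:ℝ)..z₁, kernel (q ^ 2 * z ^ 2) * weight p z
        ≤ ∫ _ in (0:ℝ)..z₁, weight 1 z₁ :=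
          integral_mono_on hz₁.1.le (hint.mono_set (uIcc_subset_uIcc left_mem_uIcc hz₁u))
            intervalIntegrable_const fun z hz => ?_
      _ = z₁ * weight 1 z₁ := by simp
    have hz' : z ∈ Ico (0:ℝ) 1 := ⟨hz.1, hz.2.trans_lt hz₁.2⟩
    have hk₀ : kernel (q ^ 2 * z ^ 2) ≤ 1 := by
      simpa [kernel_zero] using hk ⟨le_rfl, zero_le_one⟩ (Ico_subset_Icc_self hz') hz.1
    calc kernel (q ^ 2 * z ^ 2) * weight p z ≤ 1 * weight p z :=
          mul_le_mul_of_nonneg_right hk₀ (weight_pos p hz').le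
      _ ≤ weight p z₁ := by
          rw [one_mul]; exact weight_monotoneOn (by linarith) hz' (Ioo_subset_Ico_self hz₁) hz.2
      _ ≤ weight 1 z₁ := weight_le_weight_of_le one_pos hp.le (Ioo_subset_Ico_self hz₁)
  · rw [← intervalIntegral.integral_const_mul]
    refine integral_mono_on hz₁.2.le (hint.mono_set (uIcc_subset_uIcc hz₁u right_mem_uIcc))
      (((intervalIntegrable_weight hp).mono_set
        (uIcc_subset_uIcc hz₁u right_mem_uIcc)).const_mul _) fun z hz => ?_
    have hz' : z ∈ Icc (0:ℝ) 1 := ⟨hz₁.1.le.trans hz.1, hz.2⟩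
    exact mul_le_mul_of_nonneg_right (hk (Ioo_subset_Icc_self hz₁) hz' hz.1) (weight_nonneg p hz')

lemma tendsto_gap_nhdsGT_one {q : ℝ} (hq : q ∈ Ico (0:ℝ) 1) (h : 1 < 2 * q ^ 2) :
    Tendsto (fun p => gap p q) (𝓝[>] 1) atBot := by
  obtain ⟨z₁, hz₁, hk⟩ : ∃ z₁ ∈ Ioo (0:ℝ) 1, 1 < 2 * (q ^ 2 * z₁ ^ 2) := by
    have hlim : Tendsto (fun z : ℝ => 2 * (q ^ 2 * z ^ 2)) (𝓝[<] 1) (𝓝 (2 * q ^ 2)) := by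
      simpa using ((by fun_prop : Continuous fun z : ℝ => 2 * (q ^ 2 * z ^ 2)).tendsto 1).mono_left
        nhdsWithin_le_nhds
    exact (Eventually.and (Ioo_mem_nhdsLT zero_lt_one) (hlim.eventually (lt_mem_nhds h))).exists
  have hneg : kernel (q ^ 2 * z₁ ^ 2) < 0 :=
    (kernel_neg_iff (mapsTo_sq_mul_sq hq (Ioo_subset_Icc_self hz₁))).2 hk
  refine tendsto_atBot_mono' _ (eventually_mem_nhdsWithin.mono fun p hp =>
    gap_le_add_mul_integral_weight hp hq hz₁) ?_
  exact tendsto_atBot_add_const_left _ _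
    ((tendsto_integral_weight_nhdsGT_one (Ioo_subset_Ico_self hz₁)).const_mul_atTop_of_neg hneg)

def IsGapRoot (f : ℝ → ℝ) : Prop := ∀ p, 1 < p → f p ∈ Ioo 0 1 ∧ gap p (f p) = 0

namespace IsGapRoot

variable {f : ℝ → ℝ} {p q : ℝ}

lemma mem_Ico (hf : IsGapRoot f) (hp : 1 < p) : f p ∈ Ico 0 1 := Ioo_subset_Ico_self (hf p hp).1

lemma lt_of_gap_pos (hf : IsGapRoot f) (hp : 1 < p) (hq : q ∈ Ico (0:ℝ) 1)
    (h : 0 < gap p q) : q < f p :=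
  ((gap_strictAntiOn hp).lt_iff_gt (hf.mem_Ico hp) hq).1 (by rwa [(hf p hp).2])

lemma lt_of_gap_neg (hf : IsGapRoot f) (hp : 1 < p) (hq : q ∈ Ico (0:ℝ) 1)
    (h : gap p q < 0) : f p < q :=
  ((gap_strictAntiOn hp).lt_iff_gt hq (hf.mem_Ico hp)).1 (by rwa [(hf p hp).2])

lemma tendsto (hf : IsGapRoot f) {l : Filter ℝ} {a : ℝ} (ha : a ∈ Ioc (0:ℝ) 1)
    (hl : ∀ᶠ p in l, 1 < p) (hlow : ∀ q ∈ Ico 0 a, ∀ᶠ p in l, 0 < gap p q)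
    (hup : ∀ q ∈ Ioo a 1, ∀ᶠ p in l, gap p q < 0) : Tendsto f l (𝓝 a) := by
  refine tendsto_order.2 ⟨fun q hq => ?_, fun q hq => ?_⟩
  · have hq' : max q 0 ∈ Ico 0 a := ⟨le_max_right _ _, max_lt hq ha.1⟩
    filter_upwards [hl, hlow _ hq'] with p hp hpos
    exact (le_max_left _ _).trans_lt (hf.lt_of_gap_pos hp ⟨hq'.1, hq'.2.trans_le ha.2⟩ hpos)
  · rcases lt_or_ge q 1 with hq₁ | hq₁
    · filter_upwards [hl, hup q ⟨hq, hq₁⟩] with p hp hneg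
      exact hf.lt_of_gap_neg hp ⟨ha.1.le.trans hq.le, hq₁⟩ hneg
    · filter_upwards [hl] with p hp
      exact (hf p hp).1.2.trans_le hq₁

lemma strictMonoOn (hf : IsGapRoot f) : StrictMonoOn f (Ioi 1) := fun p₁ hp₁ _ hp₂ h =>
  hf.lt_of_gap_pos hp₂ (hf.mem_Ico hp₁)
    (gap_pos_of_gap_eq_zero hp₁ h (hf.mem_Ico hp₁) (hf p₁ hp₁).2)

lemma continuousOn (hf : IsGapRoot f) : ContinuousOn f (Ioi 1) := by
  refine continuousOn_of_forall_continuousAt fun p₀ (hp₀ : 1 < p₀) =>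
    hf.tendsto ⟨(hf p₀ hp₀).1.1, (hf p₀ hp₀).1.2.le⟩ (eventually_gt_nhds hp₀)
      (fun q hq => ?_) (fun q hq => ?_)
  · have hq' : q ∈ Ico (0:ℝ) 1 := ⟨hq.1, hq.2.trans (hf p₀ hp₀).1.2⟩
    refine (continuousAt_gap hp₀ hq').eventually (eventually_gt_nhds ?_)
    rw [← (hf p₀ hp₀).2]
    exact gap_strictAntiOn hp₀ hq' (hf.mem_Ico hp₀) hq.2
  · have hq' : q ∈ Ico (0:ℝ) 1 := ⟨(hf p₀ hp₀).1.1.le.trans hq.1.le, hq.2⟩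
    refine (continuousAt_gap hp₀ hq').eventually (eventually_lt_nhds ?_)
    rw [← (hf p₀ hp₀).2]
    exact gap_strictAntiOn hp₀ (hf.mem_Ico hp₀) hq' hq.1

lemma sqrt_two_div_two_lt (hf : IsGapRoot f) (hp : 1 < p) : √2 / 2 < f p :=
  hf.lt_of_gap_pos hp (Ioo_subset_Ico_self sqrt_two_div_two_mem_Ioo)
    (gap_pos_of_two_mul_sq_le hp (Ioo_subset_Ico_self sqrt_two_div_two_mem_Ioo)
      (by rw [div_pow, sq_sqrt zero_le_two]; norm_num))

lemma tendsto_nhdsGT_one (hf : IsGapRoot f) : Tendsto f (𝓝[>] 1) (𝓝 (√2 / 2)) := by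
  refine hf.tendsto (Ioo_subset_Ioc_self sqrt_two_div_two_mem_Ioo) self_mem_nhdsWithin
    (fun q hq => ?_) (fun q hq => ?_)
  · filter_upwards [self_mem_nhdsWithin] with p (hp : 1 < p)
    refine gap_pos_of_two_mul_sq_le hp ⟨hq.1, hq.2.trans sqrt_two_div_two_mem_Ioo.2⟩ ?_
    nlinarith [hq.1, hq.2, sq_sqrt (zero_le_two : (0:ℝ) ≤ 2)]
  · have hq' : q ∈ Ico (0:ℝ) 1 := ⟨sqrt_two_div_two_mem_Ioo.1.le.trans hq.1.le, hq.2⟩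
    refine (tendsto_gap_nhdsGT_one hq' ?_).eventually (eventually_lt_atBot 0)
    nlinarith [hq.1, sq_sqrt (zero_le_two : (0:ℝ) ≤ 2), sqrt_two_div_two_mem_Ioo.1]

lemma tendsto_atTop (hf : IsGapRoot f) : Tendsto f atTop (𝓝 1) :=
  hf.tendsto ⟨zero_lt_one, le_rfl⟩ (eventually_gt_atTop 1)
    (fun _ hq => (tendsto_gap_atTop hq).eventually
      (eventually_gt_nhds (rpow_pos_of_pos (sub_pos.2 (pow_lt_one₀ hq.1 hq.2 two_ne_zero)) _)))
    (fun _ hq => absurd hq.2 hq.1.not_gt)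

end IsGapRoot

end PElliptic

open PElliptic

theorem phiStar_cont_strictAnti_limits (f : ℝ → ℝ)
    (hf : ∀ p, 1 < p → f p ∈ Set.Ioo (0:ℝ) 1 ∧ 2 * E1 p (f p) = K1 p (f p)) :
    ContinuousOn (fun p => π - 2 * Real.arcsin (f p)) (Set.Ioi (1:ℝ)) ∧
    StrictAntiOn (fun p => π - 2 * Real.arcsin (f p)) (Set.Ioi (1:ℝ)) ∧
    Tendsto (fun p => π - 2 * Real.arcsin (f p)) (nhdsWithin 1 (Set.Ioi 1)) (nhds (π / 2)) ∧
    Tendsto (fun p => π - 2 * Real.arcsin (f p)) atTop (nhds 0) ∧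
    ∀ p ∈ Set.Ioi (1:ℝ), π - 2 * Real.arcsin (f p) ∈ Set.Ioo 0 (π / 2) := by
  have hroot : IsGapRoot f := fun p hp => ⟨(hf p hp).1, sub_eq_zero.2 (hf p hp).2⟩
  have hφ : Continuous fun q => π - 2 * arcsin q := by fun_prop
  have hmem : ∀ p, 1 < p → f p ∈ Icc (-1) 1 := fun p hp =>
    ⟨by linarith [(hf p hp).1.1], (hf p hp).1.2.le⟩
  refine ⟨hφ.comp_continuousOn hroot.continuousOn, fun p₁ hp₁ p₂ hp₂ h => ?_, ?_, ?_,
    fun p (hp : 1 < p) => ⟨?_, ?_⟩⟩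
  · have := strictMonoOn_arcsin (hmem p₁ hp₁) (hmem p₂ hp₂) (hroot.strictMonoOn hp₁ hp₂ h)
    dsimp only; linarith
  · have h := (hφ.tendsto _).comp hroot.tendsto_nhdsGT_one
    rwa [arcsin_sqrt_two_div_two, show π - 2 * (π / 4) = π / 2 by ring] at h
  · have h := (hφ.tendsto _).comp hroot.tendsto_atTop
    rwa [arcsin_one, show π - 2 * (π / 2) = 0 by ring] at h
  · linarith [arcsin_lt_pi_div_two.2 (hf p hp).1.2]
  · have := strictMonoOn_arcsin
      ⟨by linarith [sqrt_two_div_two_mem_Ioo.1], sqrt_two_div_two_mem_Ioo.2.le⟩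
      (hmem p hp) (hroot.sqrt_two_div_two_lt hp)
    rw [arcsin_sqrt_two_div_two] at this
    linarith
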